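/- Let m, n, k, l be positive integers with ml − nk = 1, let p ≥ 1, and define φ(t) = (t−1)^m t^{−pn}, ψ(t) = (t−1)^k t^{−pl}. Then the map ξ = (φ, ψ) : ℂ* \ {1} → ℂ² is injective, and moreover ξ(t) ≠ ξ(t') for any distinct t, t' ∈ ℂ*. -/
import Mathlib


/-- The parametrization of series (l) of the Main Theorem. -/
noncomputable def xiL (m n k l p : ℕ) : ℂ → ℂ × ℂ := fun t =>
  ((t - 1) ^ m * t ^ (-((p : ℤ) * n)), (t - 1) ^ k * t ^ (-((p : ℤ) * l)))

lemma xiL_key (m n k l p : ℕ)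
    (hm : 0 < m) (hn : 0 < n) (hk : 0 < k) (hl : 0 < l)
    (hdet : (m : ℤ) * l - (n : ℤ) * k = 1)
    {t t' : ℂ} (ht : t ≠ 0) (ht' : t' ≠ 0)
    (h : xiL m n k l p t = xiL m n k l p t') : t = t' := by
  have h1 := congrArg Prod.fst h
  have h2 := congrArg Prod.snd h
  simp only [xiL] at h1 h2
  have en : (-((p : ℤ) * n)) = -(((p * n : ℕ) : ℤ)) := by push_cast; ring
  have el : (-((p : ℤ) * l)) = -(((p * l : ℕ) : ℤ)) := by push_cast; ring
  rw [en, zpow_neg, zpow_natCast, zpow_neg, zpow_natCast] at h1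
  rw [el, zpow_neg, zpow_natCast, zpow_neg, zpow_natCast] at h2
  by_cases ht1 : t = 1
  · subst ht1
    have : (t' - 1) ^ m * (t' ^ (p * n))⁻¹ = 0 := by
      rw [← h1]; simp [hm.ne']
    rcases mul_eq_zero.mp this with h0 | h0
    · have := pow_eq_zero_iff (n := m) hm.ne' |>.mp h0
      have : t' = 1 := by linear_combination this
      exact this.symm
    · exact absurd h0 (inv_ne_zero (pow_ne_zero _ ht'))
  by_cases ht1' : t' = 1
  · subst ht1'
    have : (t - 1) ^ m * (t ^ (p * n))⁻¹ = 0 := by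
      rw [h1]; simp [hm.ne']
    rcases mul_eq_zero.mp this with h0 | h0
    · have := pow_eq_zero_iff (n := m) hm.ne' |>.mp h0
      linear_combination this
    · exact absurd h0 (inv_ne_zero (pow_ne_zero _ ht))
  have hX : t - 1 ≠ 0 := sub_ne_zero.mpr ht1
  have hY : t' - 1 ≠ 0 := sub_ne_zero.mpr ht1'
  have hpn : (t : ℂ) ^ (p * n) ≠ 0 := pow_ne_zero _ ht
  have hpn' : (t' : ℂ) ^ (p * n) ≠ 0 := pow_ne_zero _ ht'
  have hpl : (t : ℂ) ^ (p * l) ≠ 0 := pow_ne_zero _ ht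
  have hpl' : (t' : ℂ) ^ (p * l) ≠ 0 := pow_ne_zero _ ht'
  have e1 : (t - 1) ^ m * t' ^ (p * n) = (t' - 1) ^ m * t ^ (p * n) := by
    field_simp at h1
    linear_combination h1
  have e2 : (t - 1) ^ k * t' ^ (p * l) = (t' - 1) ^ k * t ^ (p * l) := by
    field_simp at h2
    linear_combination h2
  -- raise to powers
  have E1 := congrArg (· ^ l) e1
  have E2 := congrArg (· ^ n) e2
  simp only [mul_pow, ← pow_mul] at E1 E2
  -- cross-multiply: E1.lhs * E2.rhs = E1.rhs * E2.lhs
  have Hcross : (t - 1) ^ (m * l) * t' ^ (p * n * l) * ((t' - 1) ^ (k * n) * t ^ (p * l * n))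
      = (t' - 1) ^ (m * l) * t ^ (p * n * l) * ((t - 1) ^ (k * n) * t' ^ (p * l * n)) := by
    linear_combination ((t' - 1) ^ (k * n) * t ^ (p * l * n)) * E1 -
      ((t' - 1) ^ (m * l) * t ^ (p * n * l)) * E2
  have hml : m * l = n * k + 1 := by
    have : (m : ℤ) * l = (n : ℤ) * k + 1 := by linarith
    exact_mod_cast this
  have H : (t - 1) ^ (m * l) * (t' - 1) ^ (k * n) = (t' - 1) ^ (m * l) * (t - 1) ^ (k * n) := by
    have hcanc : (t' ^ (p * n * l) * t ^ (p * l * n)) ≠ 0 :=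
      mul_ne_zero (pow_ne_zero _ ht') (pow_ne_zero _ ht)
    apply mul_right_cancel₀ hcanc
    linear_combination Hcross
  rw [hml] at H
  have hkn : k * n = n * k := Nat.mul_comm k n
  rw [hkn] at H
  have H' : (t - 1) * ((t - 1) * (t' - 1)) ^ (n * k) = (t' - 1) * ((t - 1) * (t' - 1)) ^ (n * k) := by
    calc (t - 1) * ((t - 1) * (t' - 1)) ^ (n * k)
        = (t - 1) ^ (n * k + 1) * (t' - 1) ^ (n * k) := by rw [mul_pow]; ring
      _ = (t' - 1) ^ (n * k + 1) * (t - 1) ^ (n * k) := H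
      _ = (t' - 1) * ((t - 1) * (t' - 1)) ^ (n * k) := by rw [mul_pow]; ring
  have := mul_right_cancel₀ (pow_ne_zero _ (mul_ne_zero hX hY)) H'
  linear_combination this

/-- For positive integers `m, n, k, l` with `ml − nk = 1` and `p ≥ 1`,
the map `ξ(t) = ((t−1)^m t^{−pn}, (t−1)^k t^{−pl})` is injective on `ℂ* \ {1}`, and
moreover `ξ(t) ≠ ξ(t')` for any distinct `t, t' ∈ ℂ*`. -/
theorem series_l_injective (m n k l p : ℕ)
    (hm : 0 < m) (hn : 0 < n) (hk : 0 < k) (hl : 0 < l) (hp : 1 ≤ p)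
    (hdet : (m : ℤ) * l - (n : ℤ) * k = 1) :
    Set.InjOn (xiL m n k l p) {t : ℂ | t ≠ 0 ∧ t ≠ 1} ∧
    ∀ t t' : ℂ, t ≠ 0 → t' ≠ 0 → t ≠ t' → xiL m n k l p t ≠ xiL m n k l p t' := by
  constructor
  · intro t ht t' ht' h
    exact xiL_key m n k l p hm hn hk hl hdet ht.1 ht'.1 h
  · intro t t' ht ht' hne h
    exact hne (xiL_key m n k l p hm hn hk hl hdet ht ht' h)
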